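/- arXiv:2108.07465 — 4 statements merged into one kernel-verified Lean document; each statement's English description precedes it below -/
import Mathlib

section
/- If a = (a_1,...,a_k) is an integer partition with Δ(a) := (a_2+...+a_k) − a_1 < 0, then the star transposition graph G(a) has no Hamilton cycle. -/
/-!
Every edge of `G(a)` changes the first symbol, so the strings starting with symbol `1` (that is,
`0 : Fin k`) form an independent set, and an independent set of a graph with a Hamilton cycle
contains at most half of the vertices. By symmetry of the positions, a fraction `a₁ / n` of all
strings start with symbol `1`, and this fraction exceeds `1 / 2` exactly when `Δ(a) < 0`.
-/

/-- `a`-multiset permutations: strings of length `n` over the alphabet `Fin k`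
containing exactly `a c` occurrences of each symbol `c`. -/
def MultisetPerm (n k : ℕ) (a : Fin k → ℕ) : Type :=
  {x : Fin n → Fin k // ∀ c : Fin k, (Finset.univ.filter fun j => x j = c).card = a c}

instance (n k : ℕ) (a : Fin k → ℕ) : DecidableEq (MultisetPerm n k a) := by
  unfold MultisetPerm; infer_instance

/-- The star transposition graph `G(a)`: two multiset permutations are adjacent iff one is
obtained from the other by transposing the first entry with another entry carrying a
distinct symbol. -/
def starGraph (n k : ℕ) (hn : 0 < n) (a : Fin k → ℕ) : SimpleGraph (MultisetPerm n k a) :=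
  SimpleGraph.fromRel (fun x y =>
    ∃ j : Fin n, j ≠ ⟨0, hn⟩ ∧ x.1 j ≠ x.1 ⟨0, hn⟩ ∧ y.1 = x.1 ∘ Equiv.swap ⟨0, hn⟩ j)

open Finset

namespace SimpleGraph.Walk.IsHamiltonianCycle

variable {V : Type*} [DecidableEq V] {G : SimpleGraph V} {v : V} {p : G.Walk v v}

lemma exists_mem_darts_snd_eq (hp : p.IsHamiltonianCycle) (x : V) :
    ∃ d ∈ p.darts, d.snd = x := by
  have hx : x ∈ p.darts.map (·.snd) := by
    rw [map_snd_darts, ← support_tail_of_not_nil _ hp.isCycle.not_nil]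
    exact hp.isHamiltonian_tail.mem_support x
  simpa using hx

lemma exists_mem_darts_fst_eq (hp : p.IsHamiltonianCycle) (x : V) :
    ∃ d ∈ p.darts, d.fst = x := by
  have hx : x ∈ p.darts.map (·.fst) := by
    rw [map_fst_darts, ← (tail_support_perm_dropLast_support p).mem_iff,
      ← support_tail_of_not_nil _ hp.isCycle.not_nil]
    exact hp.isHamiltonian_tail.mem_support x
  simpa using hx

lemma darts_nodup (hp : p.IsHamiltonianCycle) : p.darts.Nodup :=
  List.Nodup.of_map _ hp.isCycle.isTrail.edges_nodup

/-- Each vertex of `s` is the head of one dart of the cycle and the tail of another, and no dart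
has both ends in the independent set `s`. -/
theorem two_mul_card_le_of_isIndepSet [Fintype V] (hp : p.IsHamiltonianCycle)
    {s : Finset V} (hs : G.IsIndepSet s) : 2 * #s ≤ Fintype.card V := by
  set D := p.darts.toFinset
  set into := D.filter fun d => d.snd ∈ s
  set out := D.filter fun d => d.fst ∈ s
  have hD : #D = Fintype.card V := by
    rw [List.toFinset_card_of_nodup hp.darts_nodup, length_darts, hp.length_eq]
  have hinto : #s ≤ #into := by
    refine card_le_card_of_surjOn (·.snd) fun x hx => ?_
    obtain ⟨d, hd, rfl⟩ := hp.exists_mem_darts_snd_eq x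
    exact ⟨d, by simpa [into, D, hd] using hx, rfl⟩
  have hout : #s ≤ #out := by
    refine card_le_card_of_surjOn (·.fst) fun x hx => ?_
    obtain ⟨d, hd, rfl⟩ := hp.exists_mem_darts_fst_eq x
    exact ⟨d, by simpa [out, D, hd] using hx, rfl⟩
  have hdisj : Disjoint into out :=
    disjoint_filter.mpr fun d _ hsnd hfst => hs hfst hsnd d.adj.ne d.adj
  have hunion : #(into ∪ out) ≤ #D := card_le_card (union_subset (filter_subset _ D)
    (filter_subset _ D))
  rw [card_union_of_disjoint hdisj] at hunion
  omega

end SimpleGraph.Walk.IsHamiltonianCycle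

lemma Finset.card_filter_comp_perm {α : Type*} [Fintype α] (σ : Equiv.Perm α) (P : α → Prop)
    [DecidablePred P] : #(univ.filter fun i => P (σ i)) = #(univ.filter P) :=
  card_equiv σ (by simp)

namespace MultisetPerm

variable {n k : ℕ} {a : Fin k → ℕ}

instance : Fintype (MultisetPerm n k a) := by
  unfold MultisetPerm; infer_instance

def permute (σ : Equiv.Perm (Fin n)) : MultisetPerm n k a ≃ MultisetPerm n k a where
  toFun x := ⟨x.1 ∘ σ, fun c => card_filter_comp_perm σ (x.1 · = c) ▸ x.2 c⟩
  invFun x := ⟨x.1 ∘ σ.symm, fun c => card_filter_comp_perm σ.symm (x.1 · = c) ▸ x.2 c⟩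
  left_inv x := Subtype.ext (by simp [Function.comp_assoc])
  right_inv x := Subtype.ext (by simp [Function.comp_assoc])

@[simp]
lemma coe_permute_apply (σ : Equiv.Perm (Fin n)) (x : MultisetPerm n k a) :
    (permute σ x).1 = x.1 ∘ σ :=
  rfl

lemma card_filter_apply_eq_card_filter_apply_eq (c : Fin k) (i j : Fin n) :
    #(univ.filter fun x : MultisetPerm n k a => x.1 i = c)
      = #(univ.filter fun x : MultisetPerm n k a => x.1 j = c) :=
  card_equiv (permute (Equiv.swap j i)) (by simp)

lemma mul_card_filter_apply_eq (c : Fin k) (i : Fin n) :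
    n * #(univ.filter fun x : MultisetPerm n k a => x.1 i = c)
      = a c * Fintype.card (MultisetPerm n k a) := by
  calc n * #(univ.filter fun x : MultisetPerm n k a => x.1 i = c)
      = ∑ j : Fin n, #(univ.filter fun x : MultisetPerm n k a => x.1 j = c) := by
        rw [sum_congr rfl fun j _ => card_filter_apply_eq_card_filter_apply_eq c j i, sum_const,
          card_univ, Fintype.card_fin, smul_eq_mul]
    _ = ∑ x : MultisetPerm n k a, #(univ.filter fun j => x.1 j = c) := by
        simp only [card_filter]
        exact sum_comm
    _ = a c * Fintype.card (MultisetPerm n k a) := by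
        rw [sum_congr rfl fun x _ => x.2 c, sum_const, card_univ, smul_eq_mul, mul_comm]

end MultisetPerm

lemma starGraph_adj_apply_zero_ne {n k : ℕ} {hn : 0 < n} {a : Fin k → ℕ}
    {x y : MultisetPerm n k a} (h : (starGraph n k hn a).Adj x y) :
    x.1 ⟨0, hn⟩ ≠ y.1 ⟨0, hn⟩ := by
  obtain ⟨-, ⟨j, -, hj, hy⟩ | ⟨j, -, hj, hx⟩⟩ := (SimpleGraph.fromRel_adj _ _ _).mp h
  · simpa [hy] using hj.symm
  · simpa [hx] using hj

lemma starGraph_isIndepSet_apply_zero_eq {n k : ℕ} (hn : 0 < n) (a : Fin k → ℕ) (c : Fin k) :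
    (starGraph n k hn a).IsIndepSet
      ↑(univ.filter fun x : MultisetPerm n k a => x.1 ⟨0, hn⟩ = c) :=
  fun x hx y hy _ hxy => starGraph_adj_apply_zero_ne hxy (by simp_all)

theorem stmt_4_general (k n : ℕ) (hk : 0 < k) (hn : 0 < n) (a : Fin k → ℕ)
    (hdelta : n < 2 * a ⟨0, hk⟩) :
    ¬ ∃ (v : MultisetPerm n k a) (p : (starGraph n k hn a).Walk v v),
        p.IsHamiltonianCycle := by
  rintro ⟨v, p, hp⟩
  set S := univ.filter fun x : MultisetPerm n k a => x.1 ⟨0, hn⟩ = ⟨0, hk⟩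
  set N := Fintype.card (MultisetPerm n k a)
  have hhalf : 2 * #S ≤ N :=
    hp.two_mul_card_le_of_isIndepSet (starGraph_isIndepSet_apply_zero_eq hn a _)
  have hcount : n * #S = a ⟨0, hk⟩ * N := MultisetPerm.mul_card_filter_apply_eq _ _
  have hN : 0 < N := Fintype.card_pos_iff.mpr ⟨v⟩
  have hlt : n * N < 2 * a ⟨0, hk⟩ * N := Nat.mul_lt_mul_of_pos_right hdelta hN
  linarith [Nat.mul_le_mul_left n hhalf]

/-- If `Δ(a) = (a_2+…+a_k) − a_1 < 0`, then `G(a)` has no Hamilton cycle. -/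
theorem stmt_4 (k n : ℕ) (hk : 0 < k) (hn : 0 < n) (a : Fin k → ℕ)
    (hpos : ∀ c, 1 ≤ a c)
    (hsorted : ∀ c d : Fin k, c ≤ d → a d ≤ a c)
    (hsum : n = ∑ c, a c)
    (hdelta : n < 2 * a ⟨0, hk⟩) :
    ¬ ∃ (v : MultisetPerm n k a) (p : (starGraph n k hn a).Walk v v),
        p.IsHamiltonianCycle :=
  stmt_4_general k n hk hn a hdelta
end

section
/- For any integer partition a = (a_1,...,a_k) with k ≥ 3 parts and not all parts equal to 1, the star transposition graph G(a) is not bipartite (it contains an odd cycle). -/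
set_option maxHeartbeats 4000000 in
/-- For any integer partition `a` with `k ≥ 3` parts, not all equal to `1`,
the star transposition graph `G(a)` is not bipartite (not 2-colorable). -/
theorem stmt_7 (k n : ℕ) (hk : 3 ≤ k) (hn : 0 < n) (a : Fin k → ℕ)
    (hpos : ∀ c, 1 ≤ a c)
    (hsorted : ∀ c d : Fin k, c ≤ d → a d ≤ a c)
    (hsum : n = ∑ c, a c)
    (hnot1 : ¬ ∀ c, a c = 1) :
    ¬ (starGraph n k hn a).Colorable 2 := by
  intro hcol
  obtain ⟨C⟩ := hcol
  -- the three symbols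
  have hk0 : (0 : ℕ) < k := by omega
  have hk1 : (1 : ℕ) < k := by omega
  have hk2 : (2 : ℕ) < k := by omega
  set c0 : Fin k := ⟨0, hk0⟩ with hc0
  set c1 : Fin k := ⟨1, hk1⟩ with hc1
  set c2 : Fin k := ⟨2, hk2⟩ with hc2
  have hc01 : c0 ≠ c1 := by simp [hc0, hc1, Fin.ext_iff]
  have hc02 : c0 ≠ c2 := by simp [hc0, hc2, Fin.ext_iff]
  have hc12 : c1 ≠ c2 := by simp [hc1, hc2, Fin.ext_iff]
  -- the top part has multiplicity at least 2
  have ha0 : 2 ≤ a c0 := by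
    by_contra h
    apply hnot1
    intro c
    have h1 := hpos c
    have h2 := hsorted c0 c (by simp [hc0, Fin.le_def])
    omega
  -- a base multiset permutation
  have hcard : Fintype.card (Σ c : Fin k, Fin (a c)) = n := by
    simp [Fintype.card_sigma, hsum]
  let e : (Σ c : Fin k, Fin (a c)) ≃ Fin n := Fintype.equivFinOfCardEq hcard
  let x : Fin n → Fin k := fun j => (e.symm j).1
  -- counts of x composed with any permutation
  have hcount : ∀ (σ : Equiv.Perm (Fin n)) (c : Fin k),
      (Finset.univ.filter fun j => x (σ j) = c).card = a c := by
    intro σ c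
    have h1 : (Finset.univ.filter fun j => x (σ j) = c).card
        = (Finset.univ.filter fun s : Σ c' : Fin k, Fin (a c') => s.1 = c).card := by
      apply Finset.card_equiv (σ.trans e.symm)
      intro j
      simp [x]
    rw [h1]
    have h2 : (Finset.univ.filter fun s : Σ c' : Fin k, Fin (a c') => s.1 = c)
        = Finset.univ.map ⟨Sigma.mk c, sigma_mk_injective⟩ := by
      ext ⟨c', v⟩
      simp only [Finset.mem_filter, Finset.mem_univ, true_and, Finset.mem_map,
        Function.Embedding.coeFn_mk]
      constructor
      · rintro rfl; exact ⟨v, rfl⟩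
      · rintro ⟨w, h⟩
        exact (congrArg Sigma.fst h).symm
    rw [h2, Finset.card_map]
    simp
  -- the center position
  set z : Fin n := ⟨0, hn⟩ with hz
  -- generic vertex constructor
  let V : Equiv.Perm (Fin n) → MultisetPerm n k a := fun σ => ⟨fun j => x (σ j), hcount σ⟩
  -- a position carrying symbol c0
  have hex0 : ∃ t, x t = c0 := by
    have hpos0 : 0 < (Finset.univ.filter fun j => x j = c0).card := by
      have h : (Finset.univ.filter fun j => x j = c0).card = a c0 := hcount 1 c0
      omega
    obtain ⟨t, ht⟩ := Finset.card_pos.mp hpos0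
    exact ⟨t, (Finset.mem_filter.mp ht).2⟩
  obtain ⟨t0, ht0⟩ := hex0
  set τ : Equiv.Perm (Fin n) := Equiv.swap z t0 with hτ
  set b : Fin n → Fin k := fun j => x (τ j) with hb
  have hbz : b z = c0 := by simp [hb, hτ, ht0]
  -- find p1 ≠ z with b p1 = c0
  have hp1ex : ∃ p1, p1 ≠ z ∧ b p1 = c0 := by
    have h2 : 1 < (Finset.univ.filter fun j => b j = c0).card := by
      have h : (Finset.univ.filter fun j => b j = c0).card = a c0 := hcount τ c0
      omega
    obtain ⟨j1, hj1, j2, hj2, hj12⟩ := Finset.one_lt_card.mp h2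
    rcases eq_or_ne j1 z with rfl | h
    · exact ⟨j2, fun h2 => hj12 h2.symm, (Finset.mem_filter.mp hj2).2⟩
    · exact ⟨j1, h, (Finset.mem_filter.mp hj1).2⟩
  obtain ⟨p1, hp1z, hbp1⟩ := hp1ex
  -- find p2, p3 with symbols c1, c2
  have hpex : ∀ c : Fin k, ∃ p, b p = c := by
    intro c
    have h2 : 0 < (Finset.univ.filter fun j => b j = c).card := by
      have h : (Finset.univ.filter fun j => b j = c).card = a c := hcount τ c
      rw [h]
      exact hpos c
    obtain ⟨p, hp⟩ := Finset.card_pos.mp h2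
    exact ⟨p, (Finset.mem_filter.mp hp).2⟩
  obtain ⟨p2, hbp2⟩ := hpex c1
  obtain ⟨p3, hbp3⟩ := hpex c2
  -- distinctness of positions
  have hp2z : p2 ≠ z := fun h => hc01 (by rw [← hbz, ← hbp2, h])
  have hp3z : p3 ≠ z := fun h => hc02 (by rw [← hbz, ← hbp3, h])
  have hp12 : p1 ≠ p2 := fun h => hc01 (by rw [← hbp1, ← hbp2, h])
  have hp13 : p1 ≠ p3 := fun h => hc02 (by rw [← hbp1, ← hbp3, h])
  have hp23 : p2 ≠ p3 := fun h => hc12 (by rw [← hbp2, ← hbp3, h])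
  have hzp1 : z ≠ p1 := hp1z.symm
  have hzp2 : z ≠ p2 := hp2z.symm
  have hzp3 : z ≠ p3 := hp3z.symm
  have hp21 : p2 ≠ p1 := hp12.symm
  have hp31 : p3 ≠ p1 := hp13.symm
  have hp32 : p3 ≠ p2 := hp23.symm
  -- underlying functions
  have hval : ∀ (σ : Equiv.Perm (Fin n)) (j : Fin n), (V (τ * σ)).1 j = b (σ j) :=
    fun σ j => rfl
  -- adjacency helper
  have adj : ∀ (σ : Equiv.Perm (Fin n)) (t : Fin n), t ≠ z → b (σ t) ≠ b (σ z) →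
      (starGraph n k hn a).Adj (V (τ * σ)) (V (τ * (σ * Equiv.swap z t))) := by
    intro σ t htz hne
    rw [starGraph, SimpleGraph.fromRel_adj]
    constructor
    · intro h
      have h2 := congrArg (fun v : MultisetPerm n k a => v.1 t) h
      simp only [hval, Equiv.Perm.mul_apply, Equiv.swap_apply_right] at h2
      exact hne h2
    · left
      refine ⟨t, htz, ?_, ?_⟩
      · show b (σ t) ≠ b (σ z)
        exact hne
      · funext j
        show b ((σ * Equiv.swap z t) j) = b (σ (Equiv.swap z t j))
        rw [Equiv.Perm.mul_apply]
  have e01 : (starGraph n k hn a).Adj (V (τ * ((1 : Equiv.Perm (Fin n))))) (V (τ * ((1 : Equiv.Perm (Fin n)) * Equiv.swap z p2))) := by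
    apply adj ((1 : Equiv.Perm (Fin n))) p2 hp2z
    have hA : b (((1 : Equiv.Perm (Fin n))) p2) = c1 := by
      rw [Equiv.Perm.one_apply]
      exact hbp2
    have hB : b (((1 : Equiv.Perm (Fin n))) z) = c0 := by
      rw [Equiv.Perm.one_apply]
      exact hbz
    rw [hA, hB]
    exact hc01.symm
  have e12 : (starGraph n k hn a).Adj (V (τ * ((1 : Equiv.Perm (Fin n)) * Equiv.swap z p2))) (V (τ * ((1 : Equiv.Perm (Fin n)) * Equiv.swap z p2 * Equiv.swap z p1))) := by
    apply adj ((1 : Equiv.Perm (Fin n)) * Equiv.swap z p2) p1 hp1z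
    have hA : b (((1 : Equiv.Perm (Fin n)) * Equiv.swap z p2) p1) = c0 := by
      simp only [Equiv.Perm.mul_apply]
      rw [Equiv.swap_apply_of_ne_of_ne hp1z hp12, Equiv.Perm.one_apply]
      exact hbp1
    have hB : b (((1 : Equiv.Perm (Fin n)) * Equiv.swap z p2) z) = c1 := by
      simp only [Equiv.Perm.mul_apply]
      rw [Equiv.swap_apply_left, Equiv.Perm.one_apply]
      exact hbp2
    rw [hA, hB]
    exact hc01
  have e23 : (starGraph n k hn a).Adj (V (τ * ((1 : Equiv.Perm (Fin n)) * Equiv.swap z p2 * Equiv.swap z p1))) (V (τ * ((1 : Equiv.Perm (Fin n)) * Equiv.swap z p2 * Equiv.swap z p1 * Equiv.swap z p3))) := by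
    apply adj ((1 : Equiv.Perm (Fin n)) * Equiv.swap z p2 * Equiv.swap z p1) p3 hp3z
    have hA : b (((1 : Equiv.Perm (Fin n)) * Equiv.swap z p2 * Equiv.swap z p1) p3) = c2 := by
      simp only [Equiv.Perm.mul_apply]
      rw [Equiv.swap_apply_of_ne_of_ne hp3z hp31, Equiv.swap_apply_of_ne_of_ne hp3z hp32, Equiv.Perm.one_apply]
      exact hbp3
    have hB : b (((1 : Equiv.Perm (Fin n)) * Equiv.swap z p2 * Equiv.swap z p1) z) = c0 := by
      simp only [Equiv.Perm.mul_apply]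
      rw [Equiv.swap_apply_left, Equiv.swap_apply_of_ne_of_ne hp1z hp12, Equiv.Perm.one_apply]
      exact hbp1
    rw [hA, hB]
    exact hc02.symm
  have e34 : (starGraph n k hn a).Adj (V (τ * ((1 : Equiv.Perm (Fin n)) * Equiv.swap z p2 * Equiv.swap z p1 * Equiv.swap z p3))) (V (τ * ((1 : Equiv.Perm (Fin n)) * Equiv.swap z p2 * Equiv.swap z p1 * Equiv.swap z p3 * Equiv.swap z p1))) := by
    apply adj ((1 : Equiv.Perm (Fin n)) * Equiv.swap z p2 * Equiv.swap z p1 * Equiv.swap z p3) p1 hp1z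
    have hA : b (((1 : Equiv.Perm (Fin n)) * Equiv.swap z p2 * Equiv.swap z p1 * Equiv.swap z p3) p1) = c1 := by
      simp only [Equiv.Perm.mul_apply]
      rw [Equiv.swap_apply_of_ne_of_ne hp1z hp13, Equiv.swap_apply_right, Equiv.swap_apply_left, Equiv.Perm.one_apply]
      exact hbp2
    have hB : b (((1 : Equiv.Perm (Fin n)) * Equiv.swap z p2 * Equiv.swap z p1 * Equiv.swap z p3) z) = c2 := by
      simp only [Equiv.Perm.mul_apply]
      rw [Equiv.swap_apply_left, Equiv.swap_apply_of_ne_of_ne hp3z hp31, Equiv.swap_apply_of_ne_of_ne hp3z hp32, Equiv.Perm.one_apply]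
      exact hbp3
    rw [hA, hB]
    exact hc12
  have e45 : (starGraph n k hn a).Adj (V (τ * ((1 : Equiv.Perm (Fin n)) * Equiv.swap z p2 * Equiv.swap z p1 * Equiv.swap z p3 * Equiv.swap z p1))) (V (τ * ((1 : Equiv.Perm (Fin n)) * Equiv.swap z p2 * Equiv.swap z p1 * Equiv.swap z p3 * Equiv.swap z p1 * Equiv.swap z p2))) := by
    apply adj ((1 : Equiv.Perm (Fin n)) * Equiv.swap z p2 * Equiv.swap z p1 * Equiv.swap z p3 * Equiv.swap z p1) p2 hp2z
    have hA : b (((1 : Equiv.Perm (Fin n)) * Equiv.swap z p2 * Equiv.swap z p1 * Equiv.swap z p3 * Equiv.swap z p1) p2) = c0 := by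
      simp only [Equiv.Perm.mul_apply]
      rw [Equiv.swap_apply_of_ne_of_ne hp2z hp21, Equiv.swap_apply_of_ne_of_ne hp2z hp23, Equiv.swap_apply_of_ne_of_ne hp2z hp21, Equiv.swap_apply_right, Equiv.Perm.one_apply]
      exact hbz
    have hB : b (((1 : Equiv.Perm (Fin n)) * Equiv.swap z p2 * Equiv.swap z p1 * Equiv.swap z p3 * Equiv.swap z p1) z) = c1 := by
      simp only [Equiv.Perm.mul_apply]
      rw [Equiv.swap_apply_left, Equiv.swap_apply_of_ne_of_ne hp1z hp13, Equiv.swap_apply_right, Equiv.swap_apply_left, Equiv.Perm.one_apply]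
      exact hbp2
    rw [hA, hB]
    exact hc01
  have e56 : (starGraph n k hn a).Adj (V (τ * ((1 : Equiv.Perm (Fin n)) * Equiv.swap z p2 * Equiv.swap z p1 * Equiv.swap z p3 * Equiv.swap z p1 * Equiv.swap z p2))) (V (τ * ((1 : Equiv.Perm (Fin n)) * Equiv.swap z p2 * Equiv.swap z p1 * Equiv.swap z p3 * Equiv.swap z p1 * Equiv.swap z p2 * Equiv.swap z p1))) := by
    apply adj ((1 : Equiv.Perm (Fin n)) * Equiv.swap z p2 * Equiv.swap z p1 * Equiv.swap z p3 * Equiv.swap z p1 * Equiv.swap z p2) p1 hp1z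
    have hA : b (((1 : Equiv.Perm (Fin n)) * Equiv.swap z p2 * Equiv.swap z p1 * Equiv.swap z p3 * Equiv.swap z p1 * Equiv.swap z p2) p1) = c2 := by
      simp only [Equiv.Perm.mul_apply]
      rw [Equiv.swap_apply_of_ne_of_ne hp1z hp12, Equiv.swap_apply_right, Equiv.swap_apply_left, Equiv.swap_apply_of_ne_of_ne hp3z hp31, Equiv.swap_apply_of_ne_of_ne hp3z hp32, Equiv.Perm.one_apply]
      exact hbp3
    have hB : b (((1 : Equiv.Perm (Fin n)) * Equiv.swap z p2 * Equiv.swap z p1 * Equiv.swap z p3 * Equiv.swap z p1 * Equiv.swap z p2) z) = c0 := by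
      simp only [Equiv.Perm.mul_apply]
      rw [Equiv.swap_apply_left, Equiv.swap_apply_of_ne_of_ne hp2z hp21, Equiv.swap_apply_of_ne_of_ne hp2z hp23, Equiv.swap_apply_of_ne_of_ne hp2z hp21, Equiv.swap_apply_right, Equiv.Perm.one_apply]
      exact hbz
    rw [hA, hB]
    exact hc02.symm
  have e67 : (starGraph n k hn a).Adj (V (τ * ((1 : Equiv.Perm (Fin n)) * Equiv.swap z p2 * Equiv.swap z p1 * Equiv.swap z p3 * Equiv.swap z p1 * Equiv.swap z p2 * Equiv.swap z p1))) (V (τ * ((1 : Equiv.Perm (Fin n)) * Equiv.swap z p2 * Equiv.swap z p1 * Equiv.swap z p3 * Equiv.swap z p1 * Equiv.swap z p2 * Equiv.swap z p1 * Equiv.swap z p3))) := by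
    apply adj ((1 : Equiv.Perm (Fin n)) * Equiv.swap z p2 * Equiv.swap z p1 * Equiv.swap z p3 * Equiv.swap z p1 * Equiv.swap z p2 * Equiv.swap z p1) p3 hp3z
    have hA : b (((1 : Equiv.Perm (Fin n)) * Equiv.swap z p2 * Equiv.swap z p1 * Equiv.swap z p3 * Equiv.swap z p1 * Equiv.swap z p2 * Equiv.swap z p1) p3) = c0 := by
      simp only [Equiv.Perm.mul_apply]
      rw [Equiv.swap_apply_of_ne_of_ne hp3z hp31, Equiv.swap_apply_of_ne_of_ne hp3z hp32, Equiv.swap_apply_of_ne_of_ne hp3z hp31, Equiv.swap_apply_right, Equiv.swap_apply_left, Equiv.swap_apply_of_ne_of_ne hp1z hp12, Equiv.Perm.one_apply]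
      exact hbp1
    have hB : b (((1 : Equiv.Perm (Fin n)) * Equiv.swap z p2 * Equiv.swap z p1 * Equiv.swap z p3 * Equiv.swap z p1 * Equiv.swap z p2 * Equiv.swap z p1) z) = c2 := by
      simp only [Equiv.Perm.mul_apply]
      rw [Equiv.swap_apply_left, Equiv.swap_apply_of_ne_of_ne hp1z hp12, Equiv.swap_apply_right, Equiv.swap_apply_left, Equiv.swap_apply_of_ne_of_ne hp3z hp31, Equiv.swap_apply_of_ne_of_ne hp3z hp32, Equiv.Perm.one_apply]
      exact hbp3
    rw [hA, hB]
    exact hc02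
  have hclose : V (τ * ((1 : Equiv.Perm (Fin n)) * Equiv.swap z p2 * Equiv.swap z p1 * Equiv.swap z p3 * Equiv.swap z p1 * Equiv.swap z p2 * Equiv.swap z p1 * Equiv.swap z p3)) = V (τ * (1 : Equiv.Perm (Fin n))) := by
    apply Subtype.ext
    funext j
    rw [hval, hval]
    rw [Equiv.Perm.one_apply]
    simp only [Equiv.Perm.mul_apply]
    rcases eq_or_ne j z with rfl | hjz
    · rw [Equiv.swap_apply_left, Equiv.swap_apply_of_ne_of_ne hp3z hp31, Equiv.swap_apply_of_ne_of_ne hp3z hp32, Equiv.swap_apply_of_ne_of_ne hp3z hp31, Equiv.swap_apply_right, Equiv.swap_apply_left, Equiv.swap_apply_of_ne_of_ne hp1z hp12, Equiv.Perm.one_apply, hbp1, hbz]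
    rcases eq_or_ne j p1 with rfl | hjp1
    · rw [Equiv.swap_apply_of_ne_of_ne hp1z hp13, Equiv.swap_apply_right, Equiv.swap_apply_left, Equiv.swap_apply_of_ne_of_ne hp2z hp21, Equiv.swap_apply_of_ne_of_ne hp2z hp23, Equiv.swap_apply_of_ne_of_ne hp2z hp21, Equiv.swap_apply_right, Equiv.Perm.one_apply, hbz, hbp1]
    rcases eq_or_ne j p2 with rfl | hjp2
    · rw [Equiv.swap_apply_of_ne_of_ne hp2z hp23, Equiv.swap_apply_of_ne_of_ne hp2z hp21, Equiv.swap_apply_right, Equiv.swap_apply_left, Equiv.swap_apply_of_ne_of_ne hp1z hp13, Equiv.swap_apply_right, Equiv.swap_apply_left, Equiv.Perm.one_apply]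
    rcases eq_or_ne j p3 with rfl | hjp3
    · rw [Equiv.swap_apply_right, Equiv.swap_apply_left, Equiv.swap_apply_of_ne_of_ne hp1z hp12, Equiv.swap_apply_right, Equiv.swap_apply_left, Equiv.swap_apply_of_ne_of_ne hp3z hp31, Equiv.swap_apply_of_ne_of_ne hp3z hp32, Equiv.Perm.one_apply]
    · rw [Equiv.swap_apply_of_ne_of_ne hjz hjp3, Equiv.swap_apply_of_ne_of_ne hjz hjp1, Equiv.swap_apply_of_ne_of_ne hjz hjp2, Equiv.swap_apply_of_ne_of_ne hjz hjp1, Equiv.swap_apply_of_ne_of_ne hjz hjp3, Equiv.swap_apply_of_ne_of_ne hjz hjp1, Equiv.swap_apply_of_ne_of_ne hjz hjp2, Equiv.Perm.one_apply]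
  -- the 2-coloring gives a contradiction along the closed walk of length 7
  have d01 := C.valid e01
  have d12 := C.valid e12
  have d23 := C.valid e23
  have d34 := C.valid e34
  have d45 := C.valid e45
  have d56 := C.valid e56
  have d67 := C.valid e67
  rw [hclose] at d67
  have key : ∀ (d0 d1 d2 d3 d4 d5 d6 : Fin 2), d0 ≠ d1 → d1 ≠ d2 → d2 ≠ d3 → d3 ≠ d4 →
      d4 ≠ d5 → d5 ≠ d6 → d6 ≠ d0 → False := by
    intro d0 d1 d2 d3 d4 d5 d6 h1 h2 h3 h4 h5 h6 h7
    simp only [Ne, Fin.ext_iff] at h1 h2 h3 h4 h5 h6 h7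
    have g0 := d0.isLt
    have g1 := d1.isLt
    have g2 := d2.isLt
    have g3 := d3.isLt
    have g4 := d4.isLt
    have g5 := d5.isLt
    have g6 := d6.isLt
    omega
  exact key _ _ _ _ _ _ _ d01 d12 d23 d34 d45 d56 d67
end

section
/- For any odd k ≥ 3, let ℓ = (k−1)/2, and let a, b ∈ [k] with a ≠ b. There exist permutations π, ρ of [k] satisfying π_1 = 1, ρ_1 = a, ρ_k = b, and π_{2j} ≠ ρ_j and π_{2j+1} ≠ ρ_{j+1} for all 1 ≤ j ≤ ℓ. -/
set_option maxHeartbeats 2000000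

lemma exists_perm_avoid (k : ℕ) (hk : 0 < k) (f : Fin k → Fin k) (i₁ i₂ : Fin k)
    (hi₁ : i₁ ≠ ⟨0, hk⟩) (hi₂ : i₂ ≠ ⟨0, hk⟩) (h12 : f i₁ ≠ f i₂) :
    ∃ π : Equiv.Perm (Fin k), π ⟨0, hk⟩ = ⟨0, hk⟩ ∧
      ∀ i, i ≠ ⟨0, hk⟩ → π i ≠ f i := by
  classical
  set z : Fin k := ⟨0, hk⟩ with hz
  set t : Fin k → Finset (Fin k) :=
    fun i => if i = z then {z} else (Finset.univ.erase z).erase (f i) with ht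
  have htz : t z = {z} := by simp [ht]
  have htne : ∀ i, i ≠ z → t i = (Finset.univ.erase z).erase (f i) := by
    intro i hi; simp [ht, hi]
  have hcard_univ : (Finset.univ.erase z).card = k - 1 := by
    rw [Finset.card_erase_of_mem (Finset.mem_univ z), Finset.card_univ, Fintype.card_fin]
  have htcard : ∀ i, i ≠ z → k - 2 ≤ (t i).card := by
    intro i hi
    rw [htne i hi]
    have := Finset.pred_card_le_card_erase (s := Finset.univ.erase z) (a := f i)
    omega
  have hztne : ∀ i (y : Fin k), i ≠ z → y ∈ t i → y ≠ z := by
    intro i y hi hy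
    rw [htne i hi] at hy
    exact (Finset.mem_erase.mp (Finset.mem_erase.mp hy).2).1
  have hmem : ∀ i (y : Fin k), i ≠ z → y ≠ z → y ≠ f i → y ∈ t i := by
    intro i y hi hyz hyf
    rw [htne i hi]
    exact Finset.mem_erase.mpr ⟨hyf, Finset.mem_erase.mpr ⟨hyz, Finset.mem_univ y⟩⟩
  have hall : ∀ s : Finset (Fin k), s.card ≤ (s.biUnion t).card := by
    intro s
    by_cases hs : ∃ i ∈ s, i ≠ z
    · obtain ⟨i, his, hiz⟩ := hs
      have hsub : t i ⊆ s.biUnion t := Finset.subset_biUnion_of_mem t his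
      by_cases hsc : s.card ≤ k - 2
      · exact le_trans hsc (le_trans (htcard i hiz) (Finset.card_le_card hsub))
      · push_neg at hsc
        have hpair : i₁ ∈ s → i₂ ∈ s → Finset.univ.erase z ⊆ s.biUnion t := by
          intro h1s h2s y hy
          have hyz : y ≠ z := (Finset.mem_erase.mp hy).1
          by_cases hyf : y = f i₁
          · have hy2 : y ≠ f i₂ := by rw [hyf]; exact h12
            exact Finset.mem_biUnion.mpr ⟨i₂, h2s, hmem i₂ y hi₂ hyz hy2⟩
          · exact Finset.mem_biUnion.mpr ⟨i₁, h1s, hmem i₁ y hi₁ hyz hyf⟩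
        by_cases hzs : z ∈ s
        · by_cases hsk : s.card = k
          · have hsu : s = Finset.univ :=
              Finset.eq_univ_of_card s (by rw [hsk, Fintype.card_fin])
            have huniv : Finset.univ ⊆ s.biUnion t := by
              intro y _
              by_cases hyz : y = z
              · exact Finset.mem_biUnion.mpr ⟨z, hzs, by
                  rw [htz, hyz]; exact Finset.mem_singleton_self z⟩
              · exact hpair (hsu ▸ Finset.mem_univ i₁) (hsu ▸ Finset.mem_univ i₂)
                  (Finset.mem_erase.mpr ⟨hyz, Finset.mem_univ y⟩)
            have h1 := Finset.card_le_card huniv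
            rw [Finset.card_univ, Fintype.card_fin] at h1
            omega
          · have hzins : insert z (t i) ⊆ s.biUnion t := by
              intro y hy
              rcases Finset.mem_insert.mp hy with h | h
              · exact Finset.mem_biUnion.mpr ⟨z, hzs, by
                  rw [htz, h]; exact Finset.mem_singleton_self z⟩
              · exact hsub h
            have hznot : z ∉ t i := fun h => hztne i z hiz h rfl
            have hci : (insert z (t i)).card = (t i).card + 1 :=
              Finset.card_insert_of_notMem hznot
            have h1 := Finset.card_le_card hzins
            have h2 := htcard i hiz
            have h3 : s.card ≤ k := by
              have := Finset.card_le_univ s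
              simpa [Fintype.card_fin] using this
            omega
        · have hsub2 : s ⊆ Finset.univ.erase z := fun x hx =>
            Finset.mem_erase.mpr ⟨fun h => hzs (h ▸ hx), Finset.mem_univ x⟩
          have hse : s = Finset.univ.erase z :=
            Finset.eq_of_subset_of_card_le hsub2 (by rw [hcard_univ]; omega)
          have h1s : i₁ ∈ s := hse ▸ Finset.mem_erase.mpr ⟨hi₁, Finset.mem_univ _⟩
          have h2s : i₂ ∈ s := hse ▸ Finset.mem_erase.mpr ⟨hi₂, Finset.mem_univ _⟩
          have h1 := Finset.card_le_card (hpair h1s h2s)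
          rw [hcard_univ] at h1
          have h2 : s.card = k - 1 := by rw [hse, hcard_univ]
          omega
    · push_neg at hs
      have hsub : s ⊆ {z} := fun x hx => Finset.mem_singleton.mpr (hs x hx)
      have h1 := Finset.card_le_card hsub
      rcases Finset.eq_empty_or_nonempty s with h | h
      · simp [h]
      · have hz' : z ∈ s := by obtain ⟨x, hx⟩ := h; rwa [hs x hx] at hx
        have hmemz : z ∈ s.biUnion t :=
          Finset.mem_biUnion.mpr ⟨z, hz', by rw [htz]; exact Finset.mem_singleton_self z⟩
        have h2 := Finset.card_pos.mpr ⟨z, hmemz⟩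
        rw [Finset.card_singleton] at h1
        omega
  obtain ⟨g, hginj, hgmem⟩ := (Finset.all_card_le_biUnion_card_iff_exists_injective t).mp hall
  have hgbij : Function.Bijective g := Finite.injective_iff_bijective.mp hginj
  refine ⟨Equiv.ofBijective g hgbij, ?_, ?_⟩
  · show g z = z
    have := hgmem z; rw [htz] at this; exact Finset.mem_singleton.mp this
  · intro i hi
    show g i ≠ f i
    have := hgmem i; rw [htne i hi] at this
    exact (Finset.mem_erase.mp this).1

/-- For odd `k ≥ 3`, `ℓ = (k−1)/2`, and `a ≠ b` in `[k]`, there are permutations `π, ρ`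
of `[k]` with `π_1 = 1`, `ρ_1 = a`, `ρ_k = b`, and `π_{2j} ≠ ρ_j`, `π_{2j+1} ≠ ρ_{j+1}`
for all `1 ≤ j ≤ ℓ`.  (Indices are 1-based; here `Fin k` is 0-based and the symbol `1`
is `⟨0, _⟩`.) -/
theorem stmt_10 (k : ℕ) (hk : 3 ≤ k) (hodd : k % 2 = 1)
    (a b : Fin k) (hab : a ≠ b) :
    ∃ π ρ : Equiv.Perm (Fin k),
      π ⟨0, by omega⟩ = ⟨0, by omega⟩ ∧
      ρ ⟨0, by omega⟩ = a ∧
      ρ ⟨k - 1, by omega⟩ = b ∧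
      ∀ (j : ℕ) (hj1 : 1 ≤ j) (hj2 : j ≤ (k - 1) / 2),
        π ⟨2 * j - 1, by omega⟩ ≠ ρ ⟨j - 1, by omega⟩ ∧
        π ⟨2 * j, by omega⟩ ≠ ρ ⟨j, by omega⟩ := by
  have hk0 : 0 < k := by omega
  have hklt : k - 1 < k := by omega
  set ρ₀ : Equiv.Perm (Fin k) := Equiv.swap ⟨0, hk0⟩ a with hρ₀
  set c : Fin k := ρ₀.symm b with hc
  have hcz : c ≠ ⟨0, hk0⟩ := by
    intro h
    apply hab
    have hb : b = ρ₀ ⟨0, hk0⟩ := by rw [← h, hc, Equiv.apply_symm_apply]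
    rw [hρ₀, Equiv.swap_apply_left] at hb
    exact hb.symm
  set ρ : Equiv.Perm (Fin k) := (Equiv.swap c ⟨k - 1, hklt⟩).trans ρ₀ with hρ
  have hρz : ρ ⟨0, hk0⟩ = a := by
    rw [hρ, Equiv.trans_apply,
      Equiv.swap_apply_of_ne_of_ne hcz.symm (by simp only [ne_eq, Fin.mk.injEq]; omega),
      hρ₀, Equiv.swap_apply_left]
  have hρlst : ρ ⟨k - 1, hklt⟩ = b := by
    rw [hρ, Equiv.trans_apply, Equiv.swap_apply_right, hc, Equiv.apply_symm_apply]
  set f : Fin k → Fin k :=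
    fun i => ρ ⟨i.1 / 2, Nat.lt_of_le_of_lt (Nat.div_le_self _ _) i.2⟩ with hf
  have key : ∀ (m : ℕ) (hm : m < k) (j : ℕ) (hjk : j < k), m / 2 = j →
      f ⟨m, hm⟩ = ρ ⟨j, hjk⟩ := by
    intro m hm j hjk hij
    simp only [hf]
    exact congrArg (fun x => ρ x) (Fin.ext hij)
  obtain ⟨π, hπ0, hπ⟩ := exists_perm_avoid k hk0 f ⟨1, by omega⟩ ⟨2, by omega⟩
    (by simp only [ne_eq, Fin.mk.injEq]; omega)
    (by simp only [ne_eq, Fin.mk.injEq]; omega)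
    (by
      rw [key 1 (by omega) 0 hk0 (by omega), key 2 (by omega) 1 (by omega) (by omega)]
      intro h
      have h2 := ρ.injective h
      rw [Fin.mk.injEq] at h2
      omega)
  refine ⟨π, ρ, hπ0, hρz, hρlst, ?_⟩
  intro j hj1 hj2
  have h2j : 2 * j ≤ k - 1 := by omega
  constructor
  · intro hcon
    refine hπ ⟨2 * j - 1, by omega⟩ (by simp only [ne_eq, Fin.mk.injEq]; omega) ?_
    rw [key (2 * j - 1) (by omega) (j - 1) (by omega) (by omega)]
    exact hcon
  · intro hcon
    refine hπ ⟨2 * j, by omega⟩ (by simp only [ne_eq, Fin.mk.injEq]; omega) ?_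
    rw [key (2 * j) (by omega) j (by omega) (by omega)]
    exact hcon
end

section
/- For any bitstring x of length 2n−1 with exactly n−1 ones (n ≥ 1), there is a unique integer ℓ with 0 ≤ ℓ ≤ 2n−2 such that the first 2n−2 bits of the cyclic left rotation of x by ℓ steps form a Dyck word. -/
/-!
Read a bitstring as a lattice path with steps `+1` (for a one) and `-1` (for a zero), and extend
`x` periodically. Its height `S` then drops by exactly `1` over every period `2n - 1`. The
rotation by `ℓ` gives a Dyck word exactly when `S ℓ ≤ S (ℓ + i)` for all `i ≤ 2n - 2`
(the last step of the period is then forced to be a zero). The first position where `S`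
attains its minimum over one period has this property; two such positions `ℓ < ℓ'` are
impossible, since `S ℓ ≤ S ℓ'` and `S ℓ' ≤ S (ℓ + 2n - 1) = S ℓ - 1`.
-/

open Finset

/-- A Dyck word (as a list of `Bool`, `true` = 1, `false` = 0). -/
def IsDyck (w : List Bool) : Prop :=
  (∀ i : ℕ, (w.take i).count false ≤ (w.take i).count true) ∧
    w.count false = w.count true

def pathHeight (b : ℕ → Bool) (m : ℕ) : ℤ :=
  ∑ j ∈ range m, if b j then 1 else -1

section PathHeight

variable (b : ℕ → Bool)

lemma pathHeight_succ (m : ℕ) :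
    pathHeight b (m + 1) = pathHeight b m + if b m then 1 else -1 :=
  sum_range_succ _ m

lemma sub_one_le_pathHeight_succ (m : ℕ) : pathHeight b m - 1 ≤ pathHeight b (m + 1) := by
  rw [pathHeight_succ]
  split_ifs <;> omega

lemma pathHeight_add (l i : ℕ) :
    pathHeight b (l + i) = pathHeight b l + pathHeight (fun j => b (l + j)) i :=
  sum_range_add _ l i

lemma pathHeight_shift (ℓ i : ℕ) :
    pathHeight (fun j => b (j + ℓ)) i = pathHeight b (ℓ + i) - pathHeight b ℓ := by
  rw [pathHeight_add b ℓ i, add_sub_cancel_left]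
  simp only [Nat.add_comm ℓ]

lemma pathHeight_add_period {N : ℕ} (hb : ∀ j, b (j + N) = b j) (m : ℕ) :
    pathHeight b (m + N) = pathHeight b m + pathHeight b N := by
  induction m with
  | zero => simp [pathHeight]
  | succ m ih =>
    rw [Nat.add_right_comm, pathHeight_succ, ih, hb, pathHeight_succ]
    ring

lemma count_take_ofFn_sub {K i : ℕ} (hi : i ≤ K) :
    (((List.ofFn fun j : Fin K => b j).take i).count true : ℤ)
      - ((List.ofFn fun j : Fin K => b j).take i).count false = pathHeight b i := by
  induction i with
  | zero => simp [pathHeight]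
  | succ i ih =>
    rw [List.take_add_one, List.getElem?_ofFn, dif_pos (show i < K by omega), pathHeight_succ,
      ← ih (by omega)]
    cases b i <;> simp only [Option.toList_some, List.count_append, List.count_singleton] <;> grind

/-- The drop below `0` at step `K + 1` forces a nonnegative path to end at height `0`. -/
lemma isDyck_ofFn_iff {K : ℕ} (hdrop : pathHeight b (K + 1) < 0) :
    IsDyck (List.ofFn fun j : Fin K => b j) ↔ ∀ i ≤ K, 0 ≤ pathHeight b i := by
  have htake : ∀ i, K ≤ i → (List.ofFn fun j : Fin K => b j).take i = List.ofFn fun j => b j :=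
    fun i hi => List.take_of_length_le (by simpa using hi)
  have hend := count_take_ofFn_sub b (le_refl K)
  rw [htake K le_rfl] at hend
  constructor
  · rintro ⟨hprefix, -⟩ i hi
    have := count_take_ofFn_sub b hi
    have := hprefix i
    omega
  · intro hnonneg
    have hK : pathHeight b K = 0 := by
      have := sub_one_le_pathHeight_succ b K
      have := hnonneg K le_rfl
      omega
    refine ⟨fun i => ?_, by omega⟩
    rcases le_total i K with hi | hi
    · have := count_take_ofFn_sub b hi
      have := hnonneg i hi
      omega
    · rw [htake i hi]
      omega

lemma isDyck_ofFn_shift_iff {K ℓ : ℕ} (hdrop : pathHeight b (ℓ + (K + 1)) < pathHeight b ℓ) :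
    IsDyck (List.ofFn fun j : Fin K => b (j + ℓ)) ↔
      ∀ i ≤ K, pathHeight b ℓ ≤ pathHeight b (ℓ + i) := by
  rw [isDyck_ofFn_iff (fun j => b (j + ℓ)) (by rw [pathHeight_shift]; omega)]
  simp only [pathHeight_shift, sub_nonneg]

end PathHeight

lemma pathHeight_mod_period {N : ℕ} (hN : 0 < N) (x : Fin N → Bool) :
    pathHeight (fun j => x ⟨j % N, Nat.mod_lt _ hN⟩) N = 2 * #{i | x i = true} - N := by
  have hsign : ∀ i : Fin N, (if x i then 1 else -1 : ℤ) = 2 * (if x i = true then 1 else 0) - 1 :=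
    fun i => by cases x i <;> rfl
  rw [pathHeight, ← Fin.sum_univ_eq_sum_range (fun j => if x ⟨j % N, _⟩ then 1 else -1)]
  simp only [Nat.mod_eq_of_lt (Fin.is_lt _), Fin.eta, hsign, sum_sub_distrib, ← mul_sum,
    sum_boole, sum_const, card_univ, Fintype.card_fin, nsmul_eq_mul, mul_one]

section CycleLemma

variable {S : ℕ → ℤ} {K : ℕ}

lemma cycle_lemma_exists (hS : ∀ m, S (m + (K + 1)) = S m - 1) :
    ∃ ℓ ≤ K, ∀ i ≤ K, S ℓ ≤ S (ℓ + i) := by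
  -- `ℓ` is the first position where `S` attains its minimum on `[0, K]`.
  obtain ⟨ℓ, hℓ, hfirst⟩ :=
    (range (K + 1)).exists_min_image (fun m => toLex (S m, m)) nonempty_range_add_one
  simp only [mem_range, Nat.lt_succ_iff, Prod.Lex.toLex_le_toLex'] at hℓ hfirst
  refine ⟨ℓ, hℓ, fun i hi => ?_⟩
  by_cases hwrap : ℓ + i ≤ K
  · exact (hfirst _ hwrap).1
  · have hm := hfirst (ℓ + i - (K + 1)) (by omega)
    have hS' := hS (ℓ + i - (K + 1))
    rw [Nat.sub_add_cancel (by omega)] at hS'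
    omega

lemma cycle_lemma_le (hS : ∀ m, S (m + (K + 1)) = S m - 1) {ℓ ℓ' : ℕ} (hℓ' : ℓ' ≤ K)
    (hmin : ∀ i ≤ K, S ℓ ≤ S (ℓ + i)) (hmin' : ∀ i ≤ K, S ℓ' ≤ S (ℓ' + i)) : ℓ' ≤ ℓ := by
  by_contra! hlt
  have hle : S ℓ ≤ S ℓ' := by simpa [Nat.add_sub_cancel' hlt.le] using hmin (ℓ' - ℓ) (by omega)
  have hle' : S ℓ' ≤ S ℓ - 1 := by
    rw [← hS, show ℓ + (K + 1) = ℓ' + (ℓ + (K + 1) - ℓ') by omega]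
    exact hmin' _ (by omega)
  omega

theorem cycle_lemma (hS : ∀ m, S (m + (K + 1)) = S m - 1) :
    ∃! ℓ, ℓ ≤ K ∧ ∀ i ≤ K, S ℓ ≤ S (ℓ + i) := by
  obtain ⟨ℓ, hℓ, hmin⟩ := cycle_lemma_exists hS
  exact ⟨ℓ, ⟨hℓ, hmin⟩, fun ℓ' ⟨hℓ', hmin'⟩ =>
    le_antisymm (cycle_lemma_le hS hℓ' hmin hmin') (cycle_lemma_le hS hℓ hmin' hmin)⟩

end CycleLemma

/-- For any bitstring `x` of length `2n−1` with exactly `n−1` ones, there is a unique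
`ℓ` with `0 ≤ ℓ ≤ 2n−2` such that the first `2n−2` bits of the cyclic left rotation of
`x` by `ℓ` steps form a Dyck word. -/
theorem stmt_15 (n : ℕ) (hn : 1 ≤ n)
    (x : Fin (2 * n - 1) → Bool)
    (hx : (Finset.univ.filter fun i => x i = true).card = n - 1) :
    ∃! ℓ : ℕ, ℓ ≤ 2 * n - 2 ∧
      IsDyck (List.ofFn fun i : Fin (2 * n - 2) =>
        x ⟨((i : ℕ) + ℓ) % (2 * n - 1), Nat.mod_lt _ (by omega)⟩) := by
  have hN : 0 < 2 * n - 1 := by omega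
  set b : ℕ → Bool := fun j => x ⟨j % (2 * n - 1), Nat.mod_lt _ hN⟩
  have hS : ∀ m, pathHeight b (m + (2 * n - 2 + 1)) = pathHeight b m - 1 := by
    intro m
    rw [show 2 * n - 2 + 1 = 2 * n - 1 by omega,
      pathHeight_add_period b (fun j => by simp [b]), pathHeight_mod_period hN, hx]
    omega
  refine (existsUnique_congr fun ℓ => and_congr_right fun _ => ?_).mpr (cycle_lemma hS)
  refine isDyck_ofFn_shift_iff b ?_
  rw [hS]
  omega
end
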